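/- arXiv:1802.03683 — 3 statements merged into one kernel-verified Lean document; each statement's English description precedes it below -/
import Mathlib

section
/- Let C be an additive category and let U be the full subcategory of the morphism category Mor(C) consisting of objects of the form (X --1--> X) ⊕ (Y --> 0). Then the quotient category Mor(C)/[U] is equivalent to mod-C, via sending an object f : X --> Y of Mor(C) to the cokernel of C(-,f) : C(-,X) --> C(-,Y). -/
open CategoryTheory CategoryTheory.Limits Opposite ZeroObject CategoryTheory.Pretriangulated

universe w v u

namespace Paper

section IdealQuotient

variable (C : Type u) [Category.{v} C] [Preadditive C]

/-- The additive subgroup of morphisms `X ⟶ Y` generated by the morphisms factoring through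
an object satisfying `P`; this is the ideal `[D]` associated to the full subcategory `D`
of objects satisfying `P`. -/
def idealOf (P : C → Prop) (X Y : C) : AddSubgroup (X ⟶ Y) :=
  AddSubgroup.closure
    {f : X ⟶ Y | ∃ (Z : C), P Z ∧ ∃ (u : X ⟶ Z) (v : Z ⟶ Y), f = u ≫ v}

variable {C}

lemma idealOf_comp_left (P : C → Prop) {X Y Z : C} (h : X ⟶ Y) {x : Y ⟶ Z}
    (hx : x ∈ idealOf C P Y Z) : h ≫ x ∈ idealOf C P X Z := by
  have hle : idealOf C P Y Z ≤
      AddSubgroup.comap (Preadditive.leftComp Z h) (idealOf C P X Z) := by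
    rw [idealOf, AddSubgroup.closure_le]
    rintro g ⟨W, hW, u, v, rfl⟩
    exact AddSubgroup.subset_closure ⟨W, hW, h ≫ u, v, by simp [Preadditive.leftComp]⟩
  exact hle hx

lemma idealOf_comp_right (P : C → Prop) {X Y Z : C} {x : X ⟶ Y} (h : Y ⟶ Z)
    (hx : x ∈ idealOf C P X Y) : x ≫ h ∈ idealOf C P X Z := by
  have hle : idealOf C P X Y ≤
      AddSubgroup.comap (Preadditive.rightComp X h) (idealOf C P X Z) := by
    rw [idealOf, AddSubgroup.closure_le]
    rintro g ⟨W, hW, u, v, rfl⟩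
    exact AddSubgroup.subset_closure ⟨W, hW, u, v ≫ h, by simp [Preadditive.rightComp]⟩
  exact hle hx

variable (C)

/-- The hom relation on `C` identifying two morphisms whose difference lies in the
ideal of morphisms factoring through an object satisfying `P`. -/
def idealRel (P : C → Prop) : HomRel C := fun {X Y} f g => f - g ∈ idealOf C P X Y

instance idealRel_congruence (P : C → Prop) : Congruence (idealRel C P) where
  equivalence :=
    { refl := fun f => by simpa [idealRel] using (idealOf C P _ _).zero_mem
      symm := fun {f g} h => by
        simpa [idealRel, neg_sub] using (idealOf C P _ _).neg_mem h
      trans := fun {f g h} h₁ h₂ => by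
        simpa [idealRel, sub_add_sub_cancel] using (idealOf C P _ _).add_mem h₁ h₂ }
  comp_left := by
    intro X Y Z f g g' h
    simpa [idealRel, Preadditive.comp_sub] using idealOf_comp_left P f h
  comp_right := by
    intro X Y Z f f' g h
    simpa [idealRel, Preadditive.sub_comp] using idealOf_comp_right P g h

lemma idealRel_add (P : C → Prop) ⦃X Y : C⦄ (f₁ f₂ g₁ g₂ : X ⟶ Y)
    (h₁ : idealRel C P f₁ f₂) (h₂ : idealRel C P g₁ g₂) :
    idealRel C P (f₁ + g₁) (f₂ + g₂) := by
  simpa [idealRel, add_sub_add_comm] using (idealOf C P X Y).add_mem h₁ h₂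

/-- The quotient of `C` by the ideal of morphisms factoring through an object
satisfying `P`; e.g. the stable category `C/[𝒫]`. -/
abbrev IdealQuot (P : C → Prop) := CategoryTheory.Quotient (idealRel C P)

instance (P : C → Prop) : Preadditive (IdealQuot C P) :=
  Quotient.preadditive _ (idealRel_add C P)

instance (P : C → Prop) : (Quotient.functor (idealRel C P)).Additive :=
  Quotient.functor_additive _ (idealRel_add C P)

end IdealQuotient

section FP

variable (C : Type u) [Category.{v} C] [Preadditive C]

/-- A contravariant additive-group-valued functor is finitely presented if it is a cokernel
of a morphism between representable functors. -/
def IsFP (F : Cᵒᵖ ⥤ AddCommGrpCat.{v}) : Prop :=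
  ∃ (X Y : C) (f : X ⟶ Y), Nonempty (F ≅ cokernel (preadditiveYoneda.map f))

/-- The category `mod-C` of finitely presented contravariant functors. -/
abbrev ModCat := ObjectProperty.FullSubcategory (IsFP C)

/-- A covariant functor is finitely presented if it is a cokernel of a morphism
between corepresentable functors. -/
def IsFPCo (F : C ⥤ AddCommGrpCat.{v}) : Prop :=
  ∃ (X Y : C) (f : X ⟶ Y), Nonempty (F ≅ cokernel (preadditiveCoyoneda.map f.op))

/-- The category `mod-Cᵒᵖ` of finitely presented covariant functors. -/
abbrev CoModCat := ObjectProperty.FullSubcategory (IsFPCo C)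

end FP

section ArrowPreadditive

variable {C : Type u} [Category.{v} C] [Preadditive C]

namespace ArrowHom

variable {A B : Arrow C}

instance : Zero (A ⟶ B) := ⟨{ left := 0, right := 0, w := by simp }⟩
instance : Add (A ⟶ B) :=
  ⟨fun f g => { left := f.left + g.left, right := f.right + g.right,
                w := by simp [Preadditive.add_comp, Preadditive.comp_add] }⟩
instance : Neg (A ⟶ B) :=
  ⟨fun f => { left := -f.left, right := -f.right, w := by simp }⟩
instance : Sub (A ⟶ B) :=
  ⟨fun f g => { left := f.left - g.left, right := f.right - g.right,
                w := by simp [Preadditive.sub_comp, Preadditive.comp_sub] }⟩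
instance : SMul ℕ (A ⟶ B) :=
  ⟨fun n f => { left := n • f.left, right := n • f.right, w := by simp }⟩
instance : SMul ℤ (A ⟶ B) :=
  ⟨fun n f => { left := n • f.left, right := n • f.right, w := by simp }⟩

@[simp] lemma zero_left : (0 : A ⟶ B).left = 0 := rfl
@[simp] lemma zero_right : (0 : A ⟶ B).right = 0 := rfl
@[simp] lemma add_left (f g : A ⟶ B) : (f + g).left = f.left + g.left := rfl
@[simp] lemma add_right (f g : A ⟶ B) : (f + g).right = f.right + g.right := rfl
@[simp] lemma neg_left (f : A ⟶ B) : (-f).left = -f.left := rfl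
@[simp] lemma neg_right (f : A ⟶ B) : (-f).right = -f.right := rfl

def toPair (f : A ⟶ B) : (A.left ⟶ B.left) × (A.right ⟶ B.right) := (f.left, f.right)

lemma toPair_injective : Function.Injective (toPair (A := A) (B := B)) := by
  rintro ⟨⟩ ⟨⟩ h
  injection h with h₁ h₂
  exact CommaMorphism.ext h₁ h₂

instance : AddCommGroup (A ⟶ B) :=
  toPair_injective.addCommGroup toPair rfl (fun _ _ => rfl) (fun _ => rfl) (fun _ _ => rfl)
    (fun _ _ => rfl) (fun _ _ => rfl)

end ArrowHom

instance : Preadditive (Arrow C) where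
  homGroup A B := inferInstance
  add_comp := by
    intros; apply CommaMorphism.ext <;> simp [Preadditive.add_comp]
  comp_add := by
    intros; apply CommaMorphism.ext <;> simp [Preadditive.comp_add]

end ArrowPreadditive


/-- objects of `Mor(C)` of the form `(X —1→ X) ⊕ (Y → 0)` -/
def IsUObj (C : Type u) [Category.{v} C] [Preadditive C] [HasZeroObject C]
    [HasBinaryBiproducts C] (a : Arrow C) : Prop :=
  ∃ (X Y : C), Nonempty (a ≅ Arrow.mk (biprod.map (𝟙 X) (0 : Y ⟶ (0 : C))))


/-!
The functor `f ↦ Coker C(-, f)` from `Mor(C)` to `mod-C` is additive and, by the definition of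
`mod-C`, essentially surjective. It is full: a map `Coker C(-, f) ⟶ Coker C(-, f')` lifts along the
epimorphism `C(-, Y') ⟶ Coker C(-, f')` to some `C(-, b)` by the Yoneda lemma, and the left
component `a` with `f' ∘ a = b ∘ f` comes from exactness of `C(-, X') ⟶ C(-, Y') ⟶ Coker C(-, f')`
at `X`. It vanishes on `U`, since `Coker C(-, g) = 0` for a split epimorphism `g`. Conversely, if
`(a, b) : f ⟶ f'` induces zero then, by the same exactness, `b = f' ∘ w` for some `w : Y ⟶ X'`, and
`(a, b)` is the sum of `(w ∘ f, w)`, which factors through `1 : X' ⟶ X'`, and `(a - w ∘ f, 0)`,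
which factors through `X ⟶ 0`. So the kernel of the functor is exactly `[U]`.
-/

namespace IdealQuot

variable {C D : Type*} [Category C] [Preadditive C] [Category D] [Preadditive D]
  {P : C → Prop} (L : C ⥤ D) [L.Additive] (hP : ∀ X, P X → IsZero (L.obj X))
include hP

lemma map_eq_zero_of_mem_idealOf {X Y : C} {f : X ⟶ Y} (hf : f ∈ idealOf C P X Y) :
    L.map f = 0 := by
  induction hf using AddSubgroup.closure_induction with
  | mem f hf =>
    obtain ⟨Z, hZ, u, v, rfl⟩ := hf
    rw [L.map_comp, (hP Z hZ).eq_of_src (L.map v) 0, comp_zero]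
  | zero => exact L.map_zero X Y
  | add f g _ _ hf hg => rw [L.map_add, hf, hg, add_zero]
  | neg f _ hf => rw [L.map_neg, hf, neg_zero]

def lift : IdealQuot C P ⥤ D :=
  CategoryTheory.Quotient.lift _ L fun _ _ f g hfg => by
    rw [← sub_eq_zero, ← L.map_sub]
    exact map_eq_zero_of_mem_idealOf L hP hfg

lemma lift_map_functor_map {X Y : C} (f : X ⟶ Y) :
    (lift L hP).map ((Quotient.functor (idealRel C P)).map f) = L.map f :=
  CategoryTheory.Quotient.lift_map_functor_map _ L _ f

lemma lift_faithful (hker : ∀ {X Y : C} (f : X ⟶ Y), L.map f = 0 → f ∈ idealOf C P X Y) :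
    (lift L hP).Faithful where
  map_injective := by
    rintro ⟨_⟩ ⟨_⟩ ⟨f⟩ ⟨g⟩ hfg
    exact CategoryTheory.Quotient.sound _ (hker _ (by rw [L.map_sub]; exact sub_eq_zero.2 hfg))

lemma lift_full [L.Full] : (lift L hP).Full where
  map_surjective φ := ⟨(Quotient.functor _).map (L.preimage φ),
    (lift_map_functor_map L hP _).trans (L.map_preimage φ)⟩

lemma lift_essSurj [L.EssSurj] : (lift L hP).EssSurj where
  mem_essImage Y := ⟨(Quotient.functor _).obj (L.objPreimage Y), ⟨L.objObjPreimageIso Y⟩⟩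

end IdealQuot

section PreadditiveYoneda

variable {C : Type u} [Category.{v} C] [Preadditive C]

instance : (preadditiveYoneda : C ⥤ Cᵒᵖ ⥤ AddCommGrpCat.{v}).Additive where
  map_add := by
    intros
    ext
    exact Preadditive.comp_add _ _ _ _ _ _

lemma preadditiveYoneda_obj_hom_ext {W : C} {F : Cᵒᵖ ⥤ AddCommGrpCat.{v}}
    {α β : preadditiveYoneda.obj W ⟶ F} (h : α.app (op W) (𝟙 W) = β.app (op W) (𝟙 W)) :
    α = β := by
  ext V g
  have key (γ : preadditiveYoneda.obj W ⟶ F) : γ.app V g = F.map g.op (γ.app (op W) (𝟙 W)) := by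
    exact (congrArg (γ.app V) (Category.comp_id g).symm).trans
      (ConcreteCategory.congr_hom (γ.naturality g.op) (𝟙 W))
  rw [key α, key β, h]

lemma exists_preadditiveYoneda_map_comp_eq {W Y : C} {F : Cᵒᵖ ⥤ AddCommGrpCat.{v}}
    (p : preadditiveYoneda.obj Y ⟶ F) [Epi p] (t : preadditiveYoneda.obj W ⟶ F) :
    ∃ v : W ⟶ Y, preadditiveYoneda.map v ≫ p = t := by
  obtain ⟨v, hv⟩ := (AddCommGrpCat.epi_iff_surjective (p.app (op W))).1 inferInstance
    (t.app (op W) (𝟙 W))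
  exact ⟨v, preadditiveYoneda_obj_hom_ext ((congrArg (p.app _) (Category.id_comp v)).trans hv)⟩

lemma exists_comp_eq_of_comp_cokernel_π_eq_zero {X Y W : C} (f : X ⟶ Y) (h : W ⟶ Y)
    (hh : preadditiveYoneda.map h ≫ cokernel.π (preadditiveYoneda.map f) = 0) :
    ∃ w : W ⟶ X, w ≫ f = h := by
  have hS : (ShortComplex.mk _ _ (cokernel.condition (preadditiveYoneda.map f))).Exact :=
    ShortComplex.exact_of_g_is_cokernel _ (cokernelIsCokernel _)
  have hSW := hS.map ((evaluation Cᵒᵖ AddCommGrpCat.{v}).obj (op W))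
  exact (ShortComplex.ab_exact_iff _).1 hSW h ((congrArg _ (Category.id_comp h).symm).trans
    (ConcreteCategory.congr_hom (NatTrans.congr_app hh (op W)) (𝟙 W)))

end PreadditiveYoneda

section CokernelYoneda

variable (C : Type u) [Category.{v} C] [Preadditive C]

-- Reducible, so that `rw` and `simp` see `(cokernelYoneda C).obj a` as a cokernel.
noncomputable abbrev cokernelYoneda : Arrow C ⥤ Cᵒᵖ ⥤ AddCommGrpCat.{v} where
  obj a := cokernel (preadditiveYoneda.map a.hom)
  map φ := cokernel.map _ _ (preadditiveYoneda.map φ.left) (preadditiveYoneda.map φ.right)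
    (by rw [← Functor.map_comp, ← Functor.map_comp, Arrow.w])
  map_id _ := coequalizer.hom_ext (by simp)
  map_comp _ _ := coequalizer.hom_ext (by simp)

variable {C}

@[simp]
lemma π_cokernelYoneda_map {a b : Arrow C} (φ : a ⟶ b) :
    cokernel.π (preadditiveYoneda.map a.hom) ≫ (cokernelYoneda C).map φ
      = preadditiveYoneda.map φ.right ≫ cokernel.π (preadditiveYoneda.map b.hom) :=
  cokernel.π_desc _ _ _

instance : (cokernelYoneda C).Additive where
  map_add {a b f g} := by
    apply coequalizer.hom_ext
    rw [Preadditive.comp_add]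
    simp

instance : (cokernelYoneda C).Full where
  map_surjective {a b} φ := by
    obtain ⟨v, hv⟩ := exists_preadditiveYoneda_map_comp_eq
      (cokernel.π (preadditiveYoneda.map b.hom)) (cokernel.π (preadditiveYoneda.map a.hom) ≫ φ)
    obtain ⟨u, hu⟩ := exists_comp_eq_of_comp_cokernel_π_eq_zero b.hom (a.hom ≫ v) (by
      rw [Functor.map_comp, Category.assoc, hv, cokernel.condition_assoc, zero_comp])
    exact ⟨Arrow.homMk u v hu, coequalizer.hom_ext ((π_cokernelYoneda_map _).trans hv)⟩

lemma isZero_cokernelYoneda_obj_of_isSplitEpi (a : Arrow C) [IsSplitEpi a.hom] :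
    IsZero ((cokernelYoneda C).obj a) :=
  (isZero_zero _).of_iso (cokernel.ofEpi _)

lemma mem_idealOf_of_cokernelYoneda_map_eq_zero [HasZeroObject C] {P : Arrow C → Prop}
    (hid : ∀ W : C, P (Arrow.mk (𝟙 W))) (hzero : ∀ W : C, P (Arrow.mk (0 : W ⟶ 0)))
    {a b : Arrow C} (η : a ⟶ b) (hη : (cokernelYoneda C).map η = 0) :
    η ∈ idealOf (Arrow C) P a b := by
  obtain ⟨w, hw⟩ := exists_comp_eq_of_comp_cokernel_π_eq_zero b.hom η.right (by
    rw [← π_cokernelYoneda_map, hη, comp_zero])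
  have hrest : (η.left - a.hom ≫ w) ≫ b.hom = (0 : a.left ⟶ 0) ≫ (0 : 0 ⟶ b.right) := by
    rw [Preadditive.sub_comp, Category.assoc, hw, Arrow.w, sub_self, comp_zero]
  have hdecomp : η = (Arrow.homMk (u := a.hom ≫ w) (v := w) (by simp) : a ⟶ Arrow.mk (𝟙 b.left))
        ≫ Arrow.homMk (u := 𝟙 b.left) (v := b.hom) (by simp)
      + (Arrow.homMk (u := 𝟙 a.left) (v := 0) (by simp) : a ⟶ Arrow.mk (0 : a.left ⟶ 0))
        ≫ Arrow.homMk (u := η.left - a.hom ≫ w) (v := 0) hrest := by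
    ext
    · simp
    · simp [hw]
  rw [hdecomp]
  exact add_mem (AddSubgroup.subset_closure ⟨_, hid b.left, _, _, rfl⟩)
    (AddSubgroup.subset_closure ⟨_, hzero a.left, _, _, rfl⟩)

variable [HasZeroObject C] [HasBinaryBiproducts C]

lemma isZero_cokernelYoneda_obj_of_isUObj {a : Arrow C} (ha : IsUObj C a) :
    IsZero ((cokernelYoneda C).obj a) := by
  obtain ⟨X, Y, ⟨e⟩⟩ := ha
  have : IsSplitEpi (Arrow.mk (biprod.map (𝟙 X) (0 : Y ⟶ 0))).hom :=
    ⟨⟨biprod.fst ≫ biprod.inl, biprod.hom_ext' _ _ (by simp) ((isZero_zero C).eq_of_src _ _)⟩⟩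
  exact (isZero_cokernelYoneda_obj_of_isSplitEpi _).of_iso ((cokernelYoneda C).mapIso e)

lemma isUObj_mk_id (W : C) : IsUObj C (Arrow.mk (𝟙 W)) :=
  ⟨W, 0, ⟨Arrow.isoMk' _ _ (isoBiprodZero (isZero_zero C)) (isoBiprodZero (isZero_zero C))⟩⟩

lemma isUObj_mk_zero (W : C) : IsUObj C (Arrow.mk (0 : W ⟶ 0)) :=
  ⟨0, W, ⟨Arrow.isoMk' _ _ (isoZeroBiprod (isZero_zero C)) (isoZeroBiprod (isZero_zero C))⟩⟩

variable (C) in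
noncomputable def cokernelYonedaModCat : Arrow C ⥤ ModCat C :=
  ObjectProperty.lift (IsFP C) (cokernelYoneda C) fun a => ⟨a.left, a.right, a.hom, ⟨Iso.refl _⟩⟩

-- Instance search does not find these two through `ObjectProperty.lift` here.
instance : (cokernelYonedaModCat C).Additive := Functor.instAdditiveFullSubcategoryLift ..

instance : (cokernelYonedaModCat C).Full := ObjectProperty.instFullFullSubcategoryLift ..

instance : (cokernelYonedaModCat C).EssSurj where
  mem_essImage F := by
    obtain ⟨X, Y, f, ⟨e⟩⟩ := F.property
    exact ⟨Arrow.mk f, ⟨ObjectProperty.isoMk _ e.symm⟩⟩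

lemma isZero_cokernelYonedaModCat_obj_of_isUObj {a : Arrow C} (ha : IsUObj C a) :
    IsZero ((cokernelYonedaModCat C).obj a) :=
  (IsZero.iff_id_eq_zero _).2
    (InducedCategory.hom_ext ((isZero_cokernelYoneda_obj_of_isUObj ha).eq_of_src _ _))

lemma mem_idealOf_of_cokernelYonedaModCat_map_eq_zero {a b : Arrow C} (η : a ⟶ b)
    (hη : (cokernelYonedaModCat C).map η = 0) : η ∈ idealOf (Arrow C) (IsUObj C) a b :=
  mem_idealOf_of_cokernelYoneda_map_eq_zero isUObj_mk_id isUObj_mk_zero η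
    (congr_arg InducedCategory.Hom.hom hη :)

end CokernelYoneda

/-- Let `C` be an additive category and `U` the full subcategory of `Mor(C)`
consisting of objects `(X —1→ X) ⊕ (Y → 0)`. Then `Mor(C)/[U]` is equivalent to `mod-C`,
via `f ↦ Coker C(-, f)`. -/
theorem statement0 (C : Type u) [Category.{v} C] [Preadditive C] [HasZeroObject C]
    [HasBinaryBiproducts C] :
    ∃ e : IdealQuot (Arrow C) (IsUObj C) ≌ ModCat C,
      ∀ a : Arrow C,
        Nonempty
          ((e.functor.obj ((Quotient.functor (idealRel (Arrow C) (IsUObj C))).obj a)).obj ≅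
            cokernel (preadditiveYoneda.map a.hom)) := by
  have hU : ∀ a, IsUObj C a → IsZero ((cokernelYonedaModCat C).obj a) :=
    fun _ => isZero_cokernelYonedaModCat_obj_of_isUObj
  let G := IdealQuot.lift (cokernelYonedaModCat C) hU
  have := IdealQuot.lift_faithful _ hU mem_idealOf_of_cokernelYonedaModCat_map_eq_zero
  have := IdealQuot.lift_full _ hU
  have := IdealQuot.lift_essSurj _ hU
  have : G.IsEquivalence := {}
  exact ⟨G.asEquivalence, fun _ => ⟨Iso.refl _⟩⟩

end Paper
end

section
/- Let C be an additive category and D a contravariantly finite full subcategory of C. Then the category mod-(C/[D]) of finitely presented modules over the quotient category C/[D] is equivalent to the full subcategory mod-_0 C of mod-C consisting of finitely presented C-modules F with F(D) = 0 for all D in D. -/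
/-!
Restriction along the quotient functor `π : C ⥤ C/[D]` is fully faithful on contravariant
functors, so it suffices to match objects. If `G` is the cokernel of the map
`Hom(-, π A) ⟶ Hom(-, π B)` induced by `π f`, then `G ∘ π` is the cokernel of the map induced by
`(f, d) : A ⊞ D_B ⟶ B`, where `d : D_B ⟶ B` is a right `D`-approximation: the morphisms into `B`
that vanish in `C/[D]` are exactly those factoring through `d`. Conversely, a finitely presented
`F` vanishing on `D` kills `[D]`, hence descends to `C/[D]`, and a presentation of `F` by `f`
descends to one of the lift by `π f`.
-/

open CategoryTheory CategoryTheory.Limits Opposite ZeroObject CategoryTheory.Pretriangulated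

universe w v u

namespace Paper

/-- A full subcategory (given by its membership predicate `P`) is contravariantly finite
if every object admits a right approximation by an object satisfying `P`. -/
def HasRightApprox (C : Type u) [Category.{v} C] (P : C → Prop) : Prop :=
  ∀ X : C, ∃ (D : C) (_ : P D) (f : D ⟶ X),
    ∀ (D' : C), P D' → ∀ g : D' ⟶ X, ∃ h : D' ⟶ D, h ≫ f = g

lemma isColimit_cokernelCofork_iff_app {J D : Type*} [Category J] [Category D]
    [HasZeroMorphisms D] [HasColimitsOfShape WalkingParallelPair D] {F G H : J ⥤ D}
    (f : F ⟶ G) (p : G ⟶ H) (w : f ≫ p = 0) :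
    Nonempty (IsColimit (CokernelCofork.ofπ p w)) ↔
      ∀ j, Nonempty (IsColimit (CokernelCofork.ofπ (p.app j)
        (by rw [← NatTrans.comp_app, w, zero_app]))) := by
  constructor
  · rintro ⟨hc⟩ j
    exact ⟨CokernelCofork.mapIsColimit _ hc ((evaluation J D).obj j)⟩
  · intro h
    exact ⟨evaluationJointlyReflectsColimits _ fun j =>
      (CokernelCofork.isColimitMapCoconeEquiv _ ((evaluation J D).obj j)).symm (h j).some⟩

lemma AddCommGrpCat.isColimit_cokernelCofork_iff {A B K : AddCommGrpCat.{v}} (f : A ⟶ B)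
    (p : B ⟶ K) (w : f ≫ p = 0) :
    Nonempty (IsColimit (CokernelCofork.ofπ p w)) ↔
      Function.Surjective p ∧ ∀ b, p b = 0 → ∃ a, f a = b := by
  rw [← (ShortComplex.mk f p w).exact_and_epi_g_iff_g_is_cokernel, ShortComplex.ab_exact_iff,
    AddCommGrpCat.epi_iff_surjective, and_comm]

lemma exists_comp_biprod_desc_eq_iff {C : Type*} [Category C] [Preadditive C]
    [HasBinaryBiproducts C] {X A D B : C} (g : A ⟶ B) (d : D ⟶ B) (k : X ⟶ B) :
    (∃ h : X ⟶ A ⊞ D, h ≫ biprod.desc g d = k) ↔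
      ∃ (u : X ⟶ A) (v : X ⟶ D), u ≫ g + v ≫ d = k := by
  constructor
  · rintro ⟨h, rfl⟩
    exact ⟨h ≫ biprod.fst, h ≫ biprod.snd, by simp [biprod.desc_eq, Preadditive.comp_add]⟩
  · rintro ⟨u, v, rfl⟩
    exact ⟨biprod.lift u v, by simp⟩

section QuotientOp

variable {C : Type*} [Category C] (r : HomRel C) (E : Type*) [Category E]

instance full_whiskeringLeft_quotientFunctor_op :
    ((Functor.whiskeringLeft Cᵒᵖ (Quotient r)ᵒᵖ E).obj (Quotient.functor r).op).Full where
  map_surjective {F G} τ :=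
    ⟨{ app := fun q => τ.app (op q.unop.as)
       naturality := by
         rintro ⟨⟨X⟩⟩ ⟨⟨Y⟩⟩ ⟨⟨f⟩⟩
         exact τ.naturality f.op }, rfl⟩

instance faithful_whiskeringLeft_quotientFunctor_op :
    ((Functor.whiskeringLeft Cᵒᵖ (Quotient r)ᵒᵖ E).obj (Quotient.functor r).op).Faithful where
  map_injective {F G} τ₁ τ₂ h := by
    ext ⟨⟨X⟩⟩
    exact NatTrans.congr_app h (op X)

end QuotientOp

lemma nonempty_fullSubcategory_equivalence {𝒜 ℬ : Type*} [Category 𝒜] [Category ℬ]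
    (R : 𝒜 ⥤ ℬ) [R.Full] [R.Faithful] {P : ObjectProperty 𝒜} {Q : ObjectProperty ℬ}
    (hPQ : ∀ X, P X → Q (R.obj X)) (hQP : ∀ Y, Q Y → ∃ X, P X ∧ Nonempty (R.obj X ≅ Y)) :
    Nonempty (P.FullSubcategory ≌ Q.FullSubcategory) := by
  let L := Q.lift (P.ι ⋙ R) fun X => hPQ X.obj X.property
  have : L.EssSurj := ⟨fun Y => by
    obtain ⟨X, hX, ⟨e⟩⟩ := hQP Y.obj Y.property
    exact ⟨⟨X, hX⟩, ⟨Q.isoMk e⟩⟩⟩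
  have : L.IsEquivalence := { }
  exact ⟨L.asEquivalence⟩

section Presentation

variable {𝒜 : Type u} [Category.{v} 𝒜] [Preadditive 𝒜]

structure IsPresentation {A B : 𝒜} (f : A ⟶ B) {F : 𝒜ᵒᵖ ⥤ AddCommGrpCat.{v}}
    (p : preadditiveYoneda.obj B ⟶ F) : Prop where
  surjective (X : 𝒜) : Function.Surjective (p.app (op X))
  app_eq_zero_iff {X : 𝒜} (g : X ⟶ B) : p.app (op X) g = 0 ↔ ∃ h : X ⟶ A, h ≫ f = g

variable {A B : 𝒜} {f : A ⟶ B} {F : 𝒜ᵒᵖ ⥤ AddCommGrpCat.{v}} {p : preadditiveYoneda.obj B ⟶ F}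

lemma isColimit_cokernelCofork_iff_isPresentation (w : preadditiveYoneda.map f ≫ p = 0) :
    Nonempty (IsColimit (CokernelCofork.ofπ p w)) ↔ IsPresentation f p := by
  rw [isColimit_cokernelCofork_iff_app]
  simp only [AddCommGrpCat.isColimit_cokernelCofork_iff]
  constructor
  · intro h
    exact ⟨fun X => (h (op X)).1, fun {X} g => ⟨(h (op X)).2 g, by
      rintro ⟨h, rfl⟩
      exact congrArg (fun τ : preadditiveYoneda.obj A ⟶ F => τ.app (op X) h) w⟩⟩
  · intro h X
    exact ⟨h.surjective X.unop, fun g hg => (h.app_eq_zero_iff g).1 hg⟩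

lemma IsPresentation.comp_eq_zero (hp : IsPresentation f p) :
    preadditiveYoneda.map f ≫ p = 0 := by
  ext X g
  exact (hp.app_eq_zero_iff _).2 ⟨g, rfl⟩

lemma isFP_iff_exists_isPresentation :
    IsFP 𝒜 F ↔
      ∃ (A B : 𝒜) (f : A ⟶ B) (p : preadditiveYoneda.obj B ⟶ F), IsPresentation f p := by
  constructor
  · rintro ⟨A, B, f, ⟨e⟩⟩
    refine ⟨A, B, f, cokernel.π _ ≫ e.inv, ?_⟩
    rw [← isColimit_cokernelCofork_iff_isPresentation (by simp)]
    exact ⟨(cokernelIsCokernel _).ofIsoColimit (Cofork.ext e.symm rfl)⟩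
  · rintro ⟨A, B, f, p, hp⟩
    obtain ⟨hc⟩ := (isColimit_cokernelCofork_iff_isPresentation hp.comp_eq_zero).2 hp
    exact ⟨A, B, f, ⟨hc.coconePointUniqueUpToIso (colimit.isColimit _)⟩⟩

lemma IsPresentation.isZero_obj (hp : IsPresentation f p) {X : 𝒜} (hX : IsZero X) :
    IsZero (F.obj (op X)) := by
  rw [AddCommGrpCat.isZero_iff_subsingleton]
  refine ⟨fun a b => ?_⟩
  obtain ⟨g, rfl⟩ := hp.surjective X a
  obtain ⟨g', rfl⟩ := hp.surjective X b
  rw [hX.eq_of_src g g']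

end Presentation

section Ideal

variable {C : Type u} [Category.{v} C] [Preadditive C] {P : C → Prop}

lemma idealOf_le_iff {X Y : C} {H : AddSubgroup (X ⟶ Y)} :
    idealOf C P X Y ≤ H ↔ ∀ Z, P Z → ∀ (u : X ⟶ Z) (v : Z ⟶ Y), u ≫ v ∈ H := by
  rw [idealOf, AddSubgroup.closure_le]
  exact ⟨fun h Z hZ u v => h ⟨Z, hZ, u, v, rfl⟩, by rintro h _ ⟨Z, hZ, u, v, rfl⟩; exact h Z hZ u v⟩

lemma comp_mem_idealOf {X Y Z : C} (hZ : P Z) (u : X ⟶ Z) (v : Z ⟶ Y) :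
    u ≫ v ∈ idealOf C P X Y :=
  idealOf_le_iff.1 le_rfl Z hZ u v

lemma mem_idealOf_iff_of_isRightApprox {D₀ B : C} (hD₀ : P D₀) {d : D₀ ⟶ B}
    (hd : ∀ D, P D → ∀ g : D ⟶ B, ∃ h : D ⟶ D₀, h ≫ d = g) {X : C} {k : X ⟶ B} :
    k ∈ idealOf C P X B ↔ ∃ v : X ⟶ D₀, v ≫ d = k := by
  refine ⟨fun hk => ?_, by rintro ⟨v, rfl⟩; exact comp_mem_idealOf hD₀ v d⟩
  have hle : idealOf C P X B ≤ (Preadditive.rightComp X d).range := by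
    refine idealOf_le_iff.2 fun Z hZ u v => ?_
    obtain ⟨h, rfl⟩ := hd Z hZ v
    exact ⟨u ≫ h, by simp [Preadditive.rightComp]⟩
  exact hle hk

lemma quotientFunctor_map_eq_iff {X Y : C} (f g : X ⟶ Y) :
    (Quotient.functor (idealRel C P)).map f = (Quotient.functor (idealRel C P)).map g ↔
      f - g ∈ idealOf C P X Y :=
  Quotient.functor_map_eq_iff _ _ _

lemma isZero_quotientFunctor_obj {D : C} (hD : P D) :
    IsZero ((Quotient.functor (idealRel C P)).obj D) := by
  rw [IsZero.iff_id_eq_zero, ← (Quotient.functor _).map_id, ← (Quotient.functor _).map_zero,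
    quotientFunctor_map_eq_iff, sub_zero]
  simpa using comp_mem_idealOf hD (𝟙 D) (𝟙 D)

variable {F : Cᵒᵖ ⥤ AddCommGrpCat.{v}} {B : C}

lemma app_eq_app_of_idealRel (hF : ∀ D, P D → IsZero (F.obj (op D)))
    (p : preadditiveYoneda.obj B ⟶ F) {X : C} {k₁ k₂ : X ⟶ B} (h : idealRel C P k₁ k₂) :
    p.app (op X) k₁ = p.app (op X) k₂ := by
  have hle : idealOf C P X B ≤ (p.app (op X)).hom.ker := by
    refine idealOf_le_iff.2 fun Z hZ u v => ?_
    have hv : p.app (op Z) v = 0 := (AddCommGrpCat.isZero_iff_subsingleton.1 (hF Z hZ)).elim _ _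
    exact (NatTrans.naturality_apply p u.op v).trans (by rw [hv, map_zero])
  have hker : p.app (op X) (k₁ - k₂) = 0 := hle h
  exact sub_eq_zero.1 ((map_sub _ _ _).symm.trans hker)

lemma IsPresentation.map_eq_of_idealRel {A : C} {f : A ⟶ B} {p : preadditiveYoneda.obj B ⟶ F}
    (hp : IsPresentation f p) (hF : ∀ D, P D → IsZero (F.obj (op D))) {X Y : C}
    {g₁ g₂ : X ⟶ Y} (h : idealRel C P g₁ g₂) : F.map g₁.op = F.map g₂.op := by
  ext y
  obtain ⟨k, rfl⟩ := hp.surjective Y y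
  change Y ⟶ B at k
  calc F.map g₁.op (p.app (op Y) k) = p.app (op X) (g₁ ≫ k) :=
        (NatTrans.naturality_apply p g₁.op k).symm
    _ = p.app (op X) (g₂ ≫ k) :=
        app_eq_app_of_idealRel hF p (HomRel.IsStableUnderPostcomp.comp_right k h)
    _ = F.map g₂.op (p.app (op Y) k) := NatTrans.naturality_apply p g₂.op k

end Ideal

section Restriction

variable {C : Type u} [Category.{v} C] [Preadditive C] {P : C → Prop}
  {G : (IdealQuot C P)ᵒᵖ ⥤ AddCommGrpCat.{v}}

lemma isZero_quotientFunctor_op_comp_obj (hG : IsFP (IdealQuot C P) G) {D : C} (hD : P D) :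
    IsZero (((Quotient.functor (idealRel C P)).op ⋙ G).obj (op D)) := by
  obtain ⟨A, B, f, p, hp⟩ := isFP_iff_exists_isPresentation.1 hG
  exact hp.isZero_obj (isZero_quotientFunctor_obj hD)

lemma isFP_quotientFunctor_op_comp [HasBinaryBiproducts C] (hP : HasRightApprox C P)
    (hG : IsFP (IdealQuot C P) G) : IsFP C ((Quotient.functor (idealRel C P)).op ⋙ G) := by
  set π := Quotient.functor (idealRel C P)
  obtain ⟨⟨A⟩, ⟨B⟩, f, p, hp⟩ := isFP_iff_exists_isPresentation.1 hG
  obtain ⟨g, rfl⟩ := π.map_surjective f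
  obtain ⟨D₀, hD₀, d, hd⟩ := hP B
  let p' : preadditiveYoneda.obj B ⟶ π.op ⋙ G :=
    { app := fun X => AddCommGrpCat.ofHom ((p.app (op (π.obj X.unop))).hom.comp π.mapAddHom)
      naturality := fun X Y u => by
        ext k
        exact NatTrans.naturality_apply p (π.map u.unop).op (π.map k) }
  refine isFP_iff_exists_isPresentation.2 ⟨A ⊞ D₀, B, biprod.desc g d, p', ?_, fun {X} k => ?_⟩
  · intro X y
    obtain ⟨k, rfl⟩ := hp.surjective (π.obj X) y
    obtain ⟨k, rfl⟩ := π.map_surjective k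
    exact ⟨k, rfl⟩
  · rw [exists_comp_biprod_desc_eq_iff]
    calc p'.app (op X) k = 0 ↔ ∃ h, h ≫ π.map g = π.map k := hp.app_eq_zero_iff (π.map k)
      _ ↔ ∃ u : X ⟶ A, k - u ≫ g ∈ idealOf C P X B := by
        constructor
        · rintro ⟨h, hh⟩
          obtain ⟨u, rfl⟩ := π.map_surjective h
          rw [← Functor.map_comp, eq_comm, quotientFunctor_map_eq_iff] at hh
          exact ⟨u, hh⟩
        · rintro ⟨u, hu⟩
          rw [← quotientFunctor_map_eq_iff, Functor.map_comp, eq_comm] at hu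
          exact ⟨π.map u, hu⟩
      _ ↔ ∃ (u : X ⟶ A) (v : X ⟶ D₀), u ≫ g + v ≫ d = k := by
        simp only [mem_idealOf_iff_of_isRightApprox hD₀ hd, eq_sub_iff_add_eq']

end Restriction

lemma exists_isFP_quotientFunctor_op_comp_iso {C : Type u} [Category.{v} C] [Preadditive C]
    {P : C → Prop} {F : Cᵒᵖ ⥤ AddCommGrpCat.{v}} (hF : IsFP C F)
    (hFP : ∀ D, P D → IsZero (F.obj (op D))) :
    ∃ G : (IdealQuot C P)ᵒᵖ ⥤ AddCommGrpCat.{v},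
      IsFP (IdealQuot C P) G ∧ Nonempty ((Quotient.functor (idealRel C P)).op ⋙ G ≅ F) := by
  set π := Quotient.functor (idealRel C P)
  obtain ⟨A, B, f, p, hp⟩ := isFP_iff_exists_isPresentation.1 hF
  let G := (CategoryTheory.Quotient.lift _ F.rightOp fun _ _ _ _ h =>
    congrArg Quiver.Hom.op (hp.map_eq_of_idealRel hFP h)).leftOp
  let p' : preadditiveYoneda.obj (π.obj B) ⟶ G :=
    { app := fun q => AddCommGrpCat.ofHom
        { toFun := Quot.lift (fun k : q.unop.as ⟶ B => p.app (op q.unop.as) k)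
            fun _ _ h => app_eq_app_of_idealRel hFP p ((HomRel.compClosure_iff_self _ _ _).1 h)
          map_zero' := (p.app (op q.unop.as)).hom.map_zero
          map_add' := by
            rintro ⟨k₁⟩ ⟨k₂⟩
            exact (p.app (op q.unop.as)).hom.map_add k₁ k₂ }
      naturality := by
        rintro ⟨⟨X⟩⟩ ⟨⟨Y⟩⟩ ⟨⟨u⟩⟩
        ext ⟨k⟩
        exact NatTrans.naturality_apply p u.op k }
  refine ⟨G, isFP_iff_exists_isPresentation.2 ⟨π.obj A, π.obj B, π.map f, p', ?_, ?_⟩,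
    ⟨Iso.refl _⟩⟩
  · rintro ⟨X⟩ y
    obtain ⟨k, rfl⟩ := hp.surjective X y
    exact ⟨π.map k, rfl⟩
  · rintro ⟨X⟩ k
    obtain ⟨k, rfl⟩ := π.map_surjective k
    change p.app (op X) k = 0 ↔ _
    constructor
    · intro hk
      obtain ⟨h, rfl⟩ := (hp.app_eq_zero_iff k).1 hk
      exact ⟨π.map h, (π.map_comp h f).symm⟩
    · rintro ⟨h, hh⟩
      obtain ⟨u, rfl⟩ := π.map_surjective h
      rw [← π.map_comp, quotientFunctor_map_eq_iff] at hh
      rw [← app_eq_app_of_idealRel hFP p hh]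
      exact (hp.app_eq_zero_iff _).2 ⟨u, rfl⟩

theorem statement3_general (C : Type u) [Category.{v} C] [Preadditive C]
    [HasBinaryBiproducts C] (P : C → Prop) (hP : HasRightApprox C P) :
    Nonempty (ModCat (IdealQuot C P) ≌
      ObjectProperty.FullSubcategory (fun F : Cᵒᵖ ⥤ AddCommGrpCat.{v} =>
        IsFP C F ∧ ∀ D : C, P D → IsZero (F.obj (op D)))) :=
  nonempty_fullSubcategory_equivalence
    ((Functor.whiskeringLeft _ _ _).obj (Quotient.functor (idealRel C P)).op)
    (fun _ hG => ⟨isFP_quotientFunctor_op_comp hP hG,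
      fun _ hD => isZero_quotientFunctor_op_comp_obj hG hD⟩)
    (fun _ hF => exists_isFP_quotientFunctor_op_comp_iso hF.1 hF.2)

/-- For a contravariantly finite full subcategory `D` of an additive
category `C`, the category `mod-(C/[D])` is equivalent to the full subcategory of `mod-C`
of finitely presented functors vanishing on `D`. -/
theorem statement3 (C : Type u) [Category.{v} C] [Preadditive C] [HasZeroObject C]
    [HasBinaryBiproducts C] (P : C → Prop) (hP : HasRightApprox C P) :
    Nonempty (ModCat (IdealQuot C P) ≌
      ObjectProperty.FullSubcategory (fun F : Cᵒᵖ ⥤ AddCommGrpCat.{v} =>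
        IsFP C F ∧ ∀ D : C, P D → IsZero (F.obj (op D)))) :=
  statement3_general C P hP

end Paper
end

section
/- Let C be a triangulated category and Δ(C) its category of triangles. Let R2 be the ideal of Δ(C) consisting of those morphisms φ• = (φ1, φ2, φ3) : X• --> Y• for which there exists p : X3 --> Y2 with g2 p = φ3. Then the quotient category Δ(C)/R2 is an abelian category, whose kernels and cokernels are computed via homotopy cartesian squares: the kernel of φ• is the triangle X1 --> X2 ⊕ Y1 --> Z --> ΣX1 obtained by completing (f1, φ1) to a homotopy cartesian square, and the cokernel is the triangle Z --> X3 ⊕ Y2 --> Y3 --> ΣZ obtained dually. -/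
open CategoryTheory CategoryTheory.Limits Opposite ZeroObject CategoryTheory.Pretriangulated

universe w v u

namespace Paper

section TrianglePreadditive

variable {C : Type u} [Category.{v} C] [HasShift C ℤ] [Preadditive C]
  [(shiftFunctor C (1 : ℤ)).Additive]

namespace TriHom

variable {T₁ T₂ : Triangle C}

instance : Zero (T₁ ⟶ T₂) :=
  ⟨{ hom₁ := 0, hom₂ := 0, hom₃ := 0, comm₁ := by simp, comm₂ := by simp, comm₃ := by simp }⟩
instance : Add (T₁ ⟶ T₂) :=
  ⟨fun u v =>
    { hom₁ := u.hom₁ + v.hom₁, hom₂ := u.hom₂ + v.hom₂, hom₃ := u.hom₃ + v.hom₃,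
      comm₁ := by simp [Preadditive.add_comp, Preadditive.comp_add],
      comm₂ := by simp [Preadditive.add_comp, Preadditive.comp_add],
      comm₃ := by simp [Preadditive.add_comp, Preadditive.comp_add, Functor.map_add] }⟩
instance : Neg (T₁ ⟶ T₂) :=
  ⟨fun u =>
    { hom₁ := -u.hom₁, hom₂ := -u.hom₂, hom₃ := -u.hom₃,
      comm₁ := by simp, comm₂ := by simp, comm₃ := by simp [Functor.map_neg] }⟩
instance : Sub (T₁ ⟶ T₂) :=
  ⟨fun u v =>
    { hom₁ := u.hom₁ - v.hom₁, hom₂ := u.hom₂ - v.hom₂, hom₃ := u.hom₃ - v.hom₃,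
      comm₁ := by simp [Preadditive.sub_comp, Preadditive.comp_sub],
      comm₂ := by simp [Preadditive.sub_comp, Preadditive.comp_sub],
      comm₃ := by simp [Preadditive.sub_comp, Preadditive.comp_sub, Functor.map_sub] }⟩
instance : SMul ℕ (T₁ ⟶ T₂) :=
  ⟨fun n u =>
    { hom₁ := n • u.hom₁, hom₂ := n • u.hom₂, hom₃ := n • u.hom₃,
      comm₁ := by simp, comm₂ := by simp,
      comm₃ := by simp [Functor.map_nsmul] }⟩
instance : SMul ℤ (T₁ ⟶ T₂) :=
  ⟨fun n u =>
    { hom₁ := n • u.hom₁, hom₂ := n • u.hom₂, hom₃ := n • u.hom₃,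
      comm₁ := by simp, comm₂ := by simp,
      comm₃ := by simp [Functor.map_zsmul] }⟩

@[simp] lemma zero_hom₁ : (0 : T₁ ⟶ T₂).hom₁ = 0 := rfl
@[simp] lemma add_hom₁ (u v : T₁ ⟶ T₂) : (u + v).hom₁ = u.hom₁ + v.hom₁ := rfl
@[simp] lemma sub_hom₁ (u v : T₁ ⟶ T₂) : (u - v).hom₁ = u.hom₁ - v.hom₁ := rfl
@[simp] lemma zero_hom₃ : (0 : T₁ ⟶ T₂).hom₃ = 0 := rfl
@[simp] lemma add_hom₃ (u v : T₁ ⟶ T₂) : (u + v).hom₃ = u.hom₃ + v.hom₃ := rfl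
@[simp] lemma sub_hom₃ (u v : T₁ ⟶ T₂) : (u - v).hom₃ = u.hom₃ - v.hom₃ := rfl
@[simp] lemma zero_hom₂ : (0 : T₁ ⟶ T₂).hom₂ = 0 := rfl
@[simp] lemma add_hom₂ (u v : T₁ ⟶ T₂) : (u + v).hom₂ = u.hom₂ + v.hom₂ := rfl
@[simp] lemma sub_hom₂ (u v : T₁ ⟶ T₂) : (u - v).hom₂ = u.hom₂ - v.hom₂ := rfl

def toTriple (u : T₁ ⟶ T₂) :
    (T₁.obj₁ ⟶ T₂.obj₁) × (T₁.obj₂ ⟶ T₂.obj₂) × (T₁.obj₃ ⟶ T₂.obj₃) :=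
  (u.hom₁, u.hom₂, u.hom₃)

lemma toTriple_injective : Function.Injective (toTriple (T₁ := T₁) (T₂ := T₂)) := by
  rintro ⟨⟩ ⟨⟩ h
  simp only [toTriple, Prod.mk.injEq] at h
  exact TriangleMorphism.ext h.1 h.2.1 h.2.2

instance : AddCommGroup (T₁ ⟶ T₂) :=
  toTriple_injective.addCommGroup toTriple rfl (fun _ _ => rfl) (fun _ => rfl) (fun _ _ => rfl)
    (fun _ _ => rfl) (fun _ _ => rfl)

end TriHom

instance : Preadditive (Triangle C) where
  homGroup T₁ T₂ := inferInstance
  add_comp := by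
    intros; apply TriangleMorphism.ext <;> simp [Preadditive.add_comp]
  comp_add := by
    intros; apply TriangleMorphism.ext <;> simp [Preadditive.comp_add]

end TrianglePreadditive


section S19

variable (C : Type u) [Category.{v} C] [Preadditive C] [HasZeroObject C] [HasShift C ℤ]
  [∀ n : ℤ, (CategoryTheory.shiftFunctor C n).Additive] [Pretriangulated C]

/-- the category `Δ(C)` of (distinguished) triangles in `C` -/
abbrev DistTriCat := ObjectProperty.FullSubcategory (fun T : Triangle C => T ∈ distTriang C)

/-- the ideal `R₂` of `Δ(C)`: `φ ∼ ψ` iff there is `p : X₃ ⟶ Y₂` with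
`p ≫ g₂ = φ₃ - ψ₃`. -/
def R2Rel : HomRel (DistTriCat C) := fun {A B} φ ψ =>
  ∃ p : A.obj.obj₃ ⟶ B.obj.obj₂,
    p ≫ B.obj.mor₂ = TriangleMorphism.hom₃ φ.hom - TriangleMorphism.hom₃ ψ.hom

instance : Congruence (R2Rel C) where
  equivalence :=
    { refl := fun φ => ⟨0, by simp⟩
      symm := by
        rintro φ ψ ⟨p, hp⟩
        exact ⟨-p, by rw [Preadditive.neg_comp, hp]; abel⟩
      trans := by
        rintro φ ψ χ ⟨p, hp⟩ ⟨q, hq⟩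
        exact ⟨p + q, by rw [Preadditive.add_comp, hp, hq]; abel⟩ }
  comp_left := by
    rintro A B D χ φ ψ ⟨p, hp⟩
    refine ⟨TriangleMorphism.hom₃ χ.hom ≫ p, ?_⟩
    have h₁ : TriangleMorphism.hom₃ (χ ≫ φ).hom =
        TriangleMorphism.hom₃ χ.hom ≫ TriangleMorphism.hom₃ φ.hom := rfl
    have h₂ : TriangleMorphism.hom₃ (χ ≫ ψ).hom =
        TriangleMorphism.hom₃ χ.hom ≫ TriangleMorphism.hom₃ ψ.hom := rfl
    rw [h₁, h₂, Category.assoc, hp, Preadditive.comp_sub]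
  comp_right := by
    rintro A B D φ ψ χ ⟨p, hp⟩
    refine ⟨p ≫ TriangleMorphism.hom₂ χ.hom, ?_⟩
    have h₁ : TriangleMorphism.hom₃ (φ ≫ χ).hom =
        TriangleMorphism.hom₃ φ.hom ≫ TriangleMorphism.hom₃ χ.hom := rfl
    have h₂ : TriangleMorphism.hom₃ (ψ ≫ χ).hom =
        TriangleMorphism.hom₃ ψ.hom ≫ TriangleMorphism.hom₃ χ.hom := rfl
    have hcomm : TriangleMorphism.hom₂ χ.hom ≫ D.obj.mor₂ =
        B.obj.mor₂ ≫ TriangleMorphism.hom₃ χ.hom := (TriangleMorphism.comm₂ χ.hom).symm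
    rw [h₁, h₂, Category.assoc, hcomm, ← Category.assoc, hp, Preadditive.sub_comp]

lemma R2Rel_add : ∀ ⦃A B : DistTriCat C⦄ (φ₁ φ₂ ψ₁ ψ₂ : A ⟶ B)
    (_ : R2Rel C φ₁ φ₂) (_ : R2Rel C ψ₁ ψ₂), R2Rel C (φ₁ + ψ₁) (φ₂ + ψ₂) := by
  rintro A B φ₁ φ₂ ψ₁ ψ₂ ⟨p, hp⟩ ⟨q, hq⟩
  refine ⟨p + q, ?_⟩
  have h₁ : TriangleMorphism.hom₃ (φ₁ + ψ₁).hom =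
      TriangleMorphism.hom₃ φ₁.hom + TriangleMorphism.hom₃ ψ₁.hom := rfl
  have h₂ : TriangleMorphism.hom₃ (φ₂ + ψ₂).hom =
      TriangleMorphism.hom₃ φ₂.hom + TriangleMorphism.hom₃ ψ₂.hom := rfl
  rw [Preadditive.add_comp, hp, hq, h₁, h₂]
  abel

instance : Preadditive (CategoryTheory.Quotient (R2Rel C)) :=
  Quotient.preadditive _ (R2Rel_add C)

end S19

/-!
Two morphisms of distinguished triangles agree in `Δ(C)/R₂` iff their third components differ
by a map factoring through `g₂`. Completing `(f₁, φ₁)` to a homotopy cartesian square gives a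
distinguished triangle `K` with a morphism `k : K ⟶ X` that is the identity on `X₁`; the long
exact `Hom`-sequences of `K`, `X` and `Y` show that `k` becomes a kernel of `φ`. Dually,
completing `(-φ₃, g₂)` gives a cokernel. The cokernel of `k` is the coimage of `φ`, and the
morphism from it to `Y` induced by `φ` is, by the same exact sequences, a kernel of the
cokernel of `φ`; so the coimage-image comparison is an isomorphism.
-/
lemma productTriangle.lift_π {C : Type*} [Category C] [HasShift C ℤ] {J : Type*}
    (T : J → Triangle C)
    [HasProduct (fun j => (T j).obj₁)] [HasProduct (fun j => (T j).obj₂)]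
    [HasProduct (fun j => (T j).obj₃)] [HasProduct (fun j => (T j).obj₁⟦(1 : ℤ)⟧)]
    {T' : Triangle C} (φ : ∀ j, T' ⟶ T j) (j : J) :
    productTriangle.lift T φ ≫ productTriangle.π T j = φ j :=
  (productTriangle.isLimitFan T).fac (Fan.mk T' φ) ⟨j⟩

section CoimageImage

variable {D : Type*} [Category D] [HasZeroMorphisms D] [HasKernels D] [HasCokernels D]

lemma isIso_coimageImageComparison_of_isLimit_of_isColimit {X Y K I Q : D} {f : X ⟶ Y}
    {k : K ⟶ X} {c : Y ⟶ Q} {p : X ⟶ I} {i : I ⟶ Y} {hk : k ≫ f = 0} {hc : f ≫ c = 0}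
    {hp : k ≫ p = 0} {hi : i ≫ c = 0} (hK : IsLimit (KernelFork.ofι k hk))
    (hC : IsColimit (CokernelCofork.ofπ c hc)) (hP : IsColimit (CokernelCofork.ofπ p hp))
    (hI : IsLimit (KernelFork.ofι i hi)) (hpi : p ≫ i = f) :
    IsIso (Abelian.coimageImageComparison f) := by
  let ep := IsColimit.coconePointUniqueUpToIso (colimit.isColimit _)
    (CokernelCofork.isColimitOfIsColimitOfIff' hP (kernel.ι f) fun _ g =>
      ⟨fun h => by
        obtain ⟨l, hl⟩ := KernelFork.IsLimit.lift' hK _ (kernel.condition f)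
        simp [← hl, h],
      fun h => by rw [← kernel.lift_ι f k hk, Category.assoc, h, comp_zero]⟩)
  let ei := IsLimit.conePointUniqueUpToIso
    (KernelFork.isLimitOfIsLimitOfIff' hI (cokernel.π f) fun _ g =>
      ⟨fun h => by
        obtain ⟨l, hl⟩ := CokernelCofork.IsColimit.desc' hC _ (cokernel.condition f)
        simp [← hl, reassoc_of% h],
      fun h => by rw [← cokernel.π_desc f c hc, ← Category.assoc, h, zero_comp]⟩)
    (limit.isLimit _)
  have hep : Abelian.coimage.π f ≫ ep.hom = p :=
    IsColimit.comp_coconePointUniqueUpToIso_hom _ _ WalkingParallelPair.one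
  have hei : ei.hom ≫ Abelian.image.ι f = i :=
    IsLimit.conePointUniqueUpToIso_hom_comp _ _ WalkingParallelPair.zero
  have : Abelian.coimageImageComparison f = ep.hom ≫ ei.hom := by
    rw [← cancel_epi (Abelian.coimage.π f), ← cancel_mono (Abelian.image.ι f)]
    simp only [Category.assoc]
    rw [Abelian.coimage_image_factorisation, reassoc_of% hep, hei, hpi]
  rw [this]
  infer_instance

end CoimageImage

section

variable {C : Type u} [Category.{v} C] [Preadditive C] [HasZeroObject C] [HasShift C ℤ]
  [∀ n : ℤ, (shiftFunctor C n).Additive] [Pretriangulated C]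

namespace DistTriCat

lemma exists_hom_of_comm₂ (A B : DistTriCat C) (b : A.obj.obj₂ ⟶ B.obj.obj₂)
    (c : A.obj.obj₃ ⟶ B.obj.obj₃) (h : A.obj.mor₂ ≫ c = b ≫ B.obj.mor₂) :
    ∃ θ : A ⟶ B, θ.hom.hom₂ = b ∧ θ.hom.hom₃ = c := by
  obtain ⟨a, ha₁, ha₃⟩ :=
    complete_distinguished_triangle_morphism₁ A.obj B.obj A.property B.property b c h
  exact ⟨ObjectProperty.homMk (Triangle.homMk _ _ a b c ha₁ h ha₃), rfl, rfl⟩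

lemma isZero_contractibleTriangle_zero :
    IsZero (⟨contractibleTriangle 0, contractible_distinguished 0⟩ : DistTriCat C) := by
  rw [IsZero.iff_id_eq_zero]
  ext <;> exact (isZero_zero C).eq_of_src _ _

instance : HasZeroObject (DistTriCat C) := isZero_contractibleTriangle_zero.hasZeroObject

section BinaryProducts

variable (A B : DistTriCat C)

noncomputable def prod : DistTriCat C :=
  ⟨productTriangle (pairFunction A.obj B.obj),
    productTriangle_distinguished _ (by rintro (_ | _); exacts [A.property, B.property])⟩

noncomputable def prodFan : BinaryFan A B :=
  BinaryFan.mk (P := prod A B) (ObjectProperty.homMk (productTriangle.π _ WalkingPair.left))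
    (ObjectProperty.homMk (productTriangle.π _ WalkingPair.right))

noncomputable def prodLift {T : DistTriCat C} (f : T ⟶ A) (g : T ⟶ B) : T ⟶ prod A B :=
  ObjectProperty.homMk (productTriangle.lift _ (fun j => WalkingPair.casesOn j f.hom g.hom))

lemma prodLift_hom_π {T : DistTriCat C} (f : T ⟶ A) (g : T ⟶ B) (j : WalkingPair) :
    (prodLift A B f g).hom ≫ productTriangle.π _ j = WalkingPair.casesOn j f.hom g.hom :=
  productTriangle.lift_π (pairFunction A.obj B.obj) _ j

noncomputable def isLimitProdFan : IsLimit (prodFan A B) :=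
  BinaryFan.IsLimit.mk _ (prodLift A B)
    (fun f g => ObjectProperty.hom_ext _ (prodLift_hom_π A B f g .left))
    (fun f g => ObjectProperty.hom_ext _ (prodLift_hom_π A B f g .right))
    (fun f g m hf hg => by
      refine ObjectProperty.hom_ext _ ?_
      apply Fan.IsLimit.hom_ext (productTriangle.isLimitFan (pairFunction A.obj B.obj))
      rintro (_ | _)
      · exact (congrArg InducedCategory.Hom.hom hf).trans (prodLift_hom_π A B f g .left).symm
      · exact (congrArg InducedCategory.Hom.hom hg).trans (prodLift_hom_π A B f g .right).symm)

end BinaryProducts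

instance (A B : DistTriCat C) : HasLimit (pair A B) := ⟨⟨⟨_, isLimitProdFan A B⟩⟩⟩

instance : HasBinaryProducts (DistTriCat C) := hasBinaryProducts_of_hasLimit_pair _

instance : HasBinaryBiproducts (DistTriCat C) := HasBinaryBiproducts.of_hasBinaryProducts

end DistTriCat

namespace R2Rel

instance : (Quotient.functor (R2Rel C)).Additive :=
  Quotient.functor_additive _ (R2Rel_add C)

instance : HasZeroObject (Quotient (R2Rel C)) :=
  ((Quotient.functor (R2Rel C)).map_isZero (isZero_zero (DistTriCat C))).hasZeroObject

instance : PreservesBinaryBiproducts (Quotient.functor (R2Rel C)) :=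
  preservesBinaryBiproducts_of_preservesBiproducts _

instance : HasBinaryBiproducts (Quotient (R2Rel C)) :=
  ⟨fun P Q => Functor.hasBinaryBiproduct_of_preserves (Quotient.functor (R2Rel C)) P.as Q.as⟩

instance : HasFiniteProducts (Quotient (R2Rel C)) :=
  hasFiniteProducts_of_has_binary_and_terminal

lemma map_eq_map_iff {A B : DistTriCat C} (φ ψ : A ⟶ B) :
    (Quotient.functor (R2Rel C)).map φ = (Quotient.functor (R2Rel C)).map ψ ↔
      ∃ p : A.obj.obj₃ ⟶ B.obj.obj₂, p ≫ B.obj.mor₂ = φ.hom.hom₃ - ψ.hom.hom₃ :=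
  Quotient.functor_map_eq_iff _ φ ψ

lemma map_eq_zero_iff {A B : DistTriCat C} (φ : A ⟶ B) :
    (Quotient.functor (R2Rel C)).map φ = 0 ↔
      ∃ p : A.obj.obj₃ ⟶ B.obj.obj₂, p ≫ B.obj.mor₂ = φ.hom.hom₃ := by
  rw [← (Quotient.functor (R2Rel C)).map_zero, map_eq_map_iff]
  simp

section Kernel

/- Triangles are written with the constructor `Triangle.mk'` (definitionally equal to
`Triangle.mk`), so that their objects reduce to `A.obj.obj₁`, `Z`, ... under `simp` and `rw`. -/
variable {A B : DistTriCat C} (φ : A ⟶ B) {Z : C} {w : A.obj.obj₂ ⊞ B.obj.obj₁ ⟶ Z}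
  {δ : Z ⟶ A.obj.obj₁⟦(1 : ℤ)⟧}
  (hK : Triangle.mk' _ _ _ (biprod.lift A.obj.mor₁ φ.hom.hom₁) w δ ∈ distTriang C)

section

variable {k₃ : Z ⟶ A.obj.obj₃} (hk₃ : k₃ ≫ A.obj.mor₃ = δ)
include hK hk₃

lemma exists_comp_mor₂_eq_comp_hom₃ :
    ∃ p : Z ⟶ B.obj.obj₂, p ≫ B.obj.mor₂ = k₃ ≫ φ.hom.hom₃ := by
  have hδ : δ ≫ φ.hom.hom₁⟦(1 : ℤ)⟧' = 0 := by
    simpa [← Functor.map_comp] using comp_distTriang_mor_zero₃₁ _ hK =≫ biprod.snd⟦(1 : ℤ)⟧'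
  refine Triangle.coyoneda_exact₃ _ B.property _ ?_ |>.imp fun p hp => hp.symm
  rw [Category.assoc, ← φ.hom.comm₃, ← Category.assoc, hk₃, hδ]

lemma exists_eq_comp_add_comp_mor₂ {U : C} (d : U ⟶ A.obj.obj₃) (e : U ⟶ B.obj.obj₂)
    (hd : d ≫ φ.hom.hom₃ = e ≫ B.obj.mor₂) :
    ∃ (ε : U ⟶ Z) (η : U ⟶ A.obj.obj₂), d = ε ≫ k₃ + η ≫ A.obj.mor₂ := by
  obtain ⟨ε, hε⟩ : ∃ ε : U ⟶ Z, d ≫ A.obj.mor₃ = ε ≫ δ := by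
    have h₁ : (d ≫ A.obj.mor₃) ≫ A.obj.mor₁⟦(1 : ℤ)⟧' = 0 := by
      rw [Category.assoc, comp_distTriang_mor_zero₃₁ _ A.property, comp_zero]
    have h₂ : (d ≫ A.obj.mor₃) ≫ φ.hom.hom₁⟦(1 : ℤ)⟧' = 0 := by
      rw [Category.assoc, φ.hom.comm₃, reassoc_of% hd, comp_distTriang_mor_zero₂₃ _ B.property,
        comp_zero]
    refine Triangle.coyoneda_exact₁ _ hK _ ?_
    simp only [biprod.lift_eq, Functor.map_add, Functor.map_comp, Preadditive.comp_add,
      ← Category.assoc, h₁, h₂, zero_comp, add_zero]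
  obtain ⟨η, hη⟩ := Triangle.coyoneda_exact₃ _ A.property (d - ε ≫ k₃) (by
    rw [Preadditive.sub_comp, Category.assoc, hk₃, hε, sub_self])
  exact ⟨ε, η, by rw [← hη, add_sub_cancel]⟩

lemma exists_eq_comp_of_comp_eq_comp_mor₂ {U : C} (x : U ⟶ Z) (q : U ⟶ A.obj.obj₂)
    (h : x ≫ k₃ = q ≫ A.obj.mor₂) : ∃ s : U ⟶ A.obj.obj₂ ⊞ B.obj.obj₁, x = s ≫ w := by
  have hx : x ≫ δ = 0 := by
    rw [← hk₃, reassoc_of% h, comp_distTriang_mor_zero₂₃ _ A.property, comp_zero]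
  exact Triangle.coyoneda_exact₃ _ hK x hx

end

lemma exists_kernelHom :
    ∃ k : (⟨_, hK⟩ : DistTriCat C) ⟶ A, k.hom.hom₁ = 𝟙 _ ∧ k.hom.hom₂ = biprod.fst := by
  obtain ⟨k₃, hk₂, hk₃⟩ := complete_distinguished_triangle_morphism _ A.obj hK A.property
    (𝟙 _) biprod.fst (by simp)
  exact ⟨ObjectProperty.homMk (Triangle.homMk _ _ (𝟙 _) biprod.fst k₃ (by simp) hk₂ hk₃), rfl, rfl⟩

variable {φ hK} in
lemma hom₃_comp_mor₃_of_hom₁_eq_id (k : (⟨_, hK⟩ : DistTriCat C) ⟶ A)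
    (hk₁ : k.hom.hom₁ = 𝟙 _) : k.hom.hom₃ ≫ A.obj.mor₃ = δ := by
  simpa [hk₁] using k.hom.comm₃.symm

variable (k : (⟨_, hK⟩ : DistTriCat C) ⟶ A) (hk₁ : k.hom.hom₁ = 𝟙 _)
include hk₁

lemma map_kernelHom_comp_map_eq_zero :
    (Quotient.functor (R2Rel C)).map k ≫ (Quotient.functor (R2Rel C)).map φ = 0 := by
  rw [← Functor.map_comp, map_eq_zero_iff]
  exact exists_comp_mor₂_eq_comp_hom₃ φ hK (hom₃_comp_mor₃_of_hom₁_eq_id k hk₁)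

lemma mono_map_kernelHom : Mono ((Quotient.functor (R2Rel C)).map k) := by
  refine Preadditive.mono_of_cancel_zero _ fun g hg => ?_
  obtain ⟨e, rfl⟩ := (Quotient.functor (R2Rel C)).map_surjective g
  rw [← Functor.map_comp, map_eq_zero_iff] at hg
  obtain ⟨p, hp⟩ := hg
  obtain ⟨s, hs⟩ := exists_eq_comp_of_comp_eq_comp_mor₂ φ hK
    (hom₃_comp_mor₃_of_hom₁_eq_id k hk₁) e.hom.hom₃ p hp.symm
  exact (map_eq_zero_iff e).2 ⟨s, hs.symm⟩

lemma exists_lift_of_comp_map_eq_zero {W : Quotient (R2Rel C)}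
    (g : W ⟶ (Quotient.functor (R2Rel C)).obj A) (hg : g ≫ (Quotient.functor (R2Rel C)).map φ = 0) :
    ∃ l, l ≫ (Quotient.functor (R2Rel C)).map k = g := by
  have hk₃ := hom₃_comp_mor₃_of_hom₁_eq_id k hk₁
  obtain ⟨ψ, rfl⟩ := (Quotient.functor (R2Rel C)).map_surjective g
  rw [← Functor.map_comp, map_eq_zero_iff] at hg
  obtain ⟨p, hp⟩ := hg
  obtain ⟨ε, η, hψ₃⟩ := exists_eq_comp_add_comp_mor₂ φ hK hk₃ ψ.hom.hom₃ p hp.symm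
  obtain ⟨s, hs⟩ := exists_eq_comp_of_comp_eq_comp_mor₂ φ hK hk₃ (W.as.obj.mor₂ ≫ ε)
    (ψ.hom.hom₂ - W.as.obj.mor₂ ≫ η) (by
      rw [Preadditive.sub_comp, Category.assoc, ← ψ.hom.comm₂, hψ₃]
      simp)
  obtain ⟨l, -, hl₃⟩ := DistTriCat.exists_hom_of_comm₂ W.as ⟨_, hK⟩ s ε hs
  refine ⟨(Quotient.functor (R2Rel C)).map l, (map_eq_map_iff _ _).2 ⟨-η, ?_⟩⟩
  simp [hl₃, hψ₃]

noncomputable def isLimitKernelFork :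
    IsLimit (KernelFork.ofι _ (map_kernelHom_comp_map_eq_zero φ hK k hk₁)) :=
  have := mono_map_kernelHom φ hK k hk₁
  KernelFork.IsLimit.ofι' _ _ fun g hg =>
    ⟨_, (exists_lift_of_comp_map_eq_zero φ hK k hk₁ g hg).choose_spec⟩

end Kernel

section Cokernel

variable {A B : DistTriCat C} (φ : A ⟶ B) {Z : C} {u : Z ⟶ A.obj.obj₃ ⊞ B.obj.obj₂}
  {δ : B.obj.obj₃ ⟶ Z⟦(1 : ℤ)⟧}
  (hC : Triangle.mk' _ _ _ u (biprod.desc (-φ.hom.hom₃) B.obj.mor₂) δ ∈ distTriang C)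

lemma exists_cokernelHom : ∃ c : B ⟶ (⟨_, hC⟩ : DistTriCat C),
    c.hom.hom₂ = biprod.lift 0 (𝟙 _) ∧ c.hom.hom₃ = 𝟙 _ :=
  DistTriCat.exists_hom_of_comm₂ _ _ _ _ (by simp)

variable (c : B ⟶ (⟨_, hC⟩ : DistTriCat C)) (hc₃ : c.hom.hom₃ = 𝟙 _)
include hc₃

lemma map_comp_map_cokernelHom_eq_zero {W : DistTriCat C} (ψ : W ⟶ B)
    (d : W.obj.obj₃ ⟶ A.obj.obj₃) (hψ : ψ.hom.hom₃ = d ≫ φ.hom.hom₃) :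
    (Quotient.functor (R2Rel C)).map ψ ≫ (Quotient.functor (R2Rel C)).map c = 0 := by
  rw [← Functor.map_comp, map_eq_zero_iff]
  exact ⟨biprod.lift (-d) 0, by simp [hc₃, hψ]⟩

lemma epi_map_cokernelHom : Epi ((Quotient.functor (R2Rel C)).map c) := by
  refine Preadditive.epi_of_cancel_zero _ fun g hg => ?_
  obtain ⟨e, rfl⟩ := (Quotient.functor (R2Rel C)).map_surjective g
  rw [← Functor.map_comp, map_eq_zero_iff] at hg
  obtain ⟨p, hp⟩ := hg
  exact (map_eq_zero_iff e).2 ⟨p, by simpa [hc₃] using hp⟩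

lemma exists_desc_of_map_comp_eq_zero {W : Quotient (R2Rel C)}
    (g : (Quotient.functor (R2Rel C)).obj B ⟶ W) (hg : (Quotient.functor (R2Rel C)).map φ ≫ g = 0) :
    ∃ l, (Quotient.functor (R2Rel C)).map c ≫ l = g := by
  obtain ⟨ψ, rfl⟩ := (Quotient.functor (R2Rel C)).map_surjective g
  rw [← Functor.map_comp, map_eq_zero_iff] at hg
  obtain ⟨p, hp⟩ := hg
  obtain ⟨l, -, hl₃⟩ := DistTriCat.exists_hom_of_comm₂ ⟨_, hC⟩ W.as
    (biprod.desc (-p) ψ.hom.hom₂) ψ.hom.hom₃ (by ext <;> simp [hp, ψ.hom.comm₂])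
  exact ⟨(Quotient.functor (R2Rel C)).map l, (map_eq_map_iff _ _).2 ⟨0, by simp [hc₃, hl₃]⟩⟩

noncomputable def isColimitCokernelCofork :
    IsColimit (CokernelCofork.ofπ _
      (map_comp_map_cokernelHom_eq_zero φ hC c hc₃ φ (𝟙 _) (Category.id_comp _).symm)) :=
  have := epi_map_cokernelHom φ hC c hc₃
  CokernelCofork.IsColimit.ofπ' _ _ fun g hg =>
    ⟨_, (exists_desc_of_map_comp_eq_zero φ hC c hc₃ g hg).choose_spec⟩

end Cokernel

section Image

variable {A B : DistTriCat C} (φ : A ⟶ B)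
  {Z : C} {w : A.obj.obj₂ ⊞ B.obj.obj₁ ⟶ Z} {δ : Z ⟶ A.obj.obj₁⟦(1 : ℤ)⟧}
  (hK : Triangle.mk' _ _ _ (biprod.lift A.obj.mor₁ φ.hom.hom₁) w δ ∈ distTriang C)
  (k : (⟨_, hK⟩ : DistTriCat C) ⟶ A) (hk₁ : k.hom.hom₁ = 𝟙 _)
  {Z₂ : C} {u₂ : Z₂ ⟶ Z ⊞ A.obj.obj₂} {δ₂ : A.obj.obj₃ ⟶ Z₂⟦(1 : ℤ)⟧}
  (hI : Triangle.mk' _ _ _ u₂ (biprod.desc (-k.hom.hom₃) A.obj.mor₂) δ₂ ∈ distTriang C)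

include hk₁ in
lemma exists_imageHom : ∃ μ : (⟨_, hI⟩ : DistTriCat C) ⟶ B, μ.hom.hom₃ = φ.hom.hom₃ := by
  obtain ⟨p, hp⟩ := exists_comp_mor₂_eq_comp_hom₃ φ hK (hom₃_comp_mor₃_of_hom₁_eq_id k hk₁)
  obtain ⟨μ, -, hμ₃⟩ := DistTriCat.exists_hom_of_comm₂ ⟨_, hI⟩ B
    (biprod.desc (-p) φ.hom.hom₂) φ.hom.hom₃ (by ext <;> simp [hp, φ.hom.comm₂])
  exact ⟨μ, hμ₃⟩

variable {φ hK k hI} (μ : (⟨_, hI⟩ : DistTriCat C) ⟶ B) (hμ₃ : μ.hom.hom₃ = φ.hom.hom₃)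
include hμ₃

lemma map_cokernelHom_comp_map_imageHom (ck : A ⟶ (⟨_, hI⟩ : DistTriCat C))
    (hck₃ : ck.hom.hom₃ = 𝟙 _) :
    (Quotient.functor (R2Rel C)).map ck ≫ (Quotient.functor (R2Rel C)).map μ =
      (Quotient.functor (R2Rel C)).map φ := by
  rw [← Functor.map_comp, map_eq_map_iff]
  exact ⟨0, by simp [hck₃, hμ₃]⟩

include hk₁

lemma mono_map_imageHom : Mono ((Quotient.functor (R2Rel C)).map μ) := by
  refine Preadditive.mono_of_cancel_zero _ fun g hg => ?_
  obtain ⟨e, rfl⟩ := (Quotient.functor (R2Rel C)).map_surjective g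
  rw [← Functor.map_comp, map_eq_zero_iff] at hg
  obtain ⟨p, hp⟩ := hg
  obtain ⟨ε, η, he₃⟩ := exists_eq_comp_add_comp_mor₂ φ hK (hom₃_comp_mor₃_of_hom₁_eq_id k hk₁)
    e.hom.hom₃ p (by simpa [hμ₃] using hp.symm)
  exact (map_eq_zero_iff e).2 ⟨biprod.lift (-ε) η, by simp [he₃]⟩

variable {Z' : C} {u : Z' ⟶ A.obj.obj₃ ⊞ B.obj.obj₂} {δ' : B.obj.obj₃ ⟶ Z'⟦(1 : ℤ)⟧}
  {hC : Triangle.mk' _ _ _ u (biprod.desc (-φ.hom.hom₃) B.obj.mor₂) δ' ∈ distTriang C}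
  (c : B ⟶ (⟨_, hC⟩ : DistTriCat C)) (hc₃ : c.hom.hom₃ = 𝟙 _)
include hc₃

lemma exists_lift_of_comp_map_cokernelHom_eq_zero {W : Quotient (R2Rel C)}
    (g : W ⟶ (Quotient.functor (R2Rel C)).obj B) (hg : g ≫ (Quotient.functor (R2Rel C)).map c = 0) :
    ∃ l, l ≫ (Quotient.functor (R2Rel C)).map μ = g := by
  obtain ⟨ψ, rfl⟩ := (Quotient.functor (R2Rel C)).map_surjective g
  rw [← Functor.map_comp, map_eq_zero_iff] at hg
  obtain ⟨p, hp⟩ := hg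
  have hψ₃ : ψ.hom.hom₃ = -((p ≫ biprod.fst) ≫ φ.hom.hom₃) + (p ≫ biprod.snd) ≫ B.obj.mor₂ := by
    simpa [hc₃, biprod.desc_eq] using hp.symm
  obtain ⟨ε, η, hε⟩ := exists_eq_comp_add_comp_mor₂ φ hK (hom₃_comp_mor₃_of_hom₁_eq_id k hk₁)
    (-(W.as.obj.mor₂ ≫ p ≫ biprod.fst)) (ψ.hom.hom₂ - W.as.obj.mor₂ ≫ p ≫ biprod.snd) (by
      rw [Preadditive.sub_comp, ← ψ.hom.comm₂, hψ₃]
      simp)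
  obtain ⟨l, -, hl₃⟩ := DistTriCat.exists_hom_of_comm₂ W.as ⟨_, hI⟩
    (biprod.lift (-ε) η) (-(p ≫ biprod.fst)) (by simp [hε])
  refine ⟨(Quotient.functor (R2Rel C)).map l, (map_eq_map_iff _ _).2 ⟨-(p ≫ biprod.snd), ?_⟩⟩
  simp [hl₃, hμ₃, hψ₃]

noncomputable def isLimitImageKernelFork :
    IsLimit (KernelFork.ofι _
      (map_comp_map_cokernelHom_eq_zero φ hC c hc₃ μ (𝟙 _) (by rw [hμ₃, Category.id_comp]))) :=
  have := mono_map_imageHom hk₁ μ hμ₃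
  KernelFork.IsLimit.ofι' _ _ fun g hg =>
    ⟨_, (exists_lift_of_comp_map_cokernelHom_eq_zero hk₁ μ hμ₃ c hc₃ g hg).choose_spec⟩

end Image

instance : HasKernels (Quotient (R2Rel C)) where
  has_limit {X _} f := by
    obtain ⟨φ, rfl⟩ := (Quotient.functor (R2Rel C)).map_surjective f
    obtain ⟨_, _, _, hK⟩ := distinguished_cocone_triangle (biprod.lift X.as.obj.mor₁ φ.hom.hom₁)
    obtain ⟨k, hk₁, -⟩ := exists_kernelHom φ hK
    exact HasLimit.mk ⟨_, isLimitKernelFork φ hK k hk₁⟩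

instance : HasCokernels (Quotient (R2Rel C)) where
  has_colimit {_ Y} f := by
    obtain ⟨φ, rfl⟩ := (Quotient.functor (R2Rel C)).map_surjective f
    obtain ⟨_, _, _, hC⟩ := distinguished_cocone_triangle₁ (biprod.desc (-φ.hom.hom₃) Y.as.obj.mor₂)
    obtain ⟨c, -, hc₃⟩ := exists_cokernelHom φ hC
    exact HasColimit.mk ⟨_, isColimitCokernelCofork φ hC c hc₃⟩

instance {X Y : Quotient (R2Rel C)} (f : X ⟶ Y) : IsIso (Abelian.coimageImageComparison f) := by
  obtain ⟨φ, rfl⟩ := (Quotient.functor (R2Rel C)).map_surjective f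
  obtain ⟨_, _, _, hK⟩ := distinguished_cocone_triangle (biprod.lift X.as.obj.mor₁ φ.hom.hom₁)
  obtain ⟨k, hk₁, -⟩ := exists_kernelHom φ hK
  obtain ⟨_, _, _, hC⟩ := distinguished_cocone_triangle₁ (biprod.desc (-φ.hom.hom₃) Y.as.obj.mor₂)
  obtain ⟨c, -, hc₃⟩ := exists_cokernelHom φ hC
  obtain ⟨_, _, _, hI⟩ := distinguished_cocone_triangle₁ (biprod.desc (-k.hom.hom₃) X.as.obj.mor₂)
  obtain ⟨ck, -, hck₃⟩ := exists_cokernelHom k hI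
  obtain ⟨μ, hμ₃⟩ := exists_imageHom φ hK k hk₁ hI
  exact isIso_coimageImageComparison_of_isLimit_of_isColimit (isLimitKernelFork φ hK k hk₁)
    (isColimitCokernelCofork φ hC c hc₃) (isColimitCokernelCofork k hI ck hck₃)
    (isLimitImageKernelFork hk₁ μ hμ₃ c hc₃) (map_cokernelHom_comp_map_imageHom μ hμ₃ ck hck₃)

end R2Rel

end

/-- Let `C` be a triangulated category. Then `Δ(C)/R₂` is an abelian
category whose kernels and cokernels are computed via homotopy cartesian squares:
the kernel of `φ•` is induced by any distinguished triangle
`X₁ → X₂ ⊕ Y₁ → Z → ΣX₁` completing `(f₁, φ₁)` to a homotopy cartesian square, and the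
cokernel by any distinguished triangle `Z → X₃ ⊕ Y₂ → Y₃ → ΣZ` with second map
`(-φ₃, g₂)` obtained dually. -/
theorem statement19 (C : Type u) [Category.{v} C] [Preadditive C] [HasZeroObject C]
    [HasShift C ℤ] [∀ n : ℤ, (CategoryTheory.shiftFunctor C n).Additive]
    [Pretriangulated C] [IsTriangulated C] :
    Nonempty (Abelian (CategoryTheory.Quotient (R2Rel C))) ∧
    (∀ (A B : DistTriCat C) (φ : A ⟶ B),
      (∀ (Z : C) (w : A.obj.obj₂ ⊞ B.obj.obj₁ ⟶ Z)
         (δ : Z ⟶ (CategoryTheory.shiftFunctor C (1 : ℤ)).obj A.obj.obj₁)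
         (hdist : Triangle.mk (biprod.lift A.obj.mor₁ (TriangleMorphism.hom₁ φ.hom)) w δ ∈
           distTriang C),
        ∃ k : (⟨Triangle.mk (biprod.lift A.obj.mor₁ (TriangleMorphism.hom₁ φ.hom)) w δ,
            hdist⟩ : DistTriCat C) ⟶ A,
          TriangleMorphism.hom₁ k.hom = 𝟙 A.obj.obj₁ ∧
          TriangleMorphism.hom₂ k.hom = biprod.fst ∧
          ∃ hzero : (Quotient.functor (R2Rel C)).map k ≫
              (Quotient.functor (R2Rel C)).map φ = 0,
            Nonempty (IsLimit (KernelFork.ofι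
              ((Quotient.functor (R2Rel C)).map k) hzero))) ∧
      (∀ (Z : C) (u : Z ⟶ A.obj.obj₃ ⊞ B.obj.obj₂)
         (δ' : B.obj.obj₃ ⟶ (CategoryTheory.shiftFunctor C (1 : ℤ)).obj Z)
         (hdist : Triangle.mk u
           (biprod.desc (-(TriangleMorphism.hom₃ φ.hom)) B.obj.mor₂) δ' ∈ distTriang C),
        ∃ c : B ⟶ (⟨Triangle.mk u
            (biprod.desc (-(TriangleMorphism.hom₃ φ.hom)) B.obj.mor₂) δ', hdist⟩ : DistTriCat C),
          TriangleMorphism.hom₂ c.hom = biprod.lift 0 (𝟙 B.obj.obj₂) ∧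
          TriangleMorphism.hom₃ c.hom = 𝟙 B.obj.obj₃ ∧
          ∃ hzero : (Quotient.functor (R2Rel C)).map φ ≫
              (Quotient.functor (R2Rel C)).map c = 0,
            Nonempty (IsColimit (CokernelCofork.ofπ
              ((Quotient.functor (R2Rel C)).map c) hzero)))) := by
  refine ⟨⟨Abelian.ofCoimageImageComparisonIsIso⟩, fun _ _ φ => ⟨fun _ _ _ hK => ?_, ?_⟩⟩
  · obtain ⟨k, hk₁, hk₂⟩ := R2Rel.exists_kernelHom φ hK
    exact ⟨k, hk₁, hk₂, _, ⟨R2Rel.isLimitKernelFork φ hK k hk₁⟩⟩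
  · intro _ _ _ hC
    obtain ⟨c, hc₂, hc₃⟩ := R2Rel.exists_cokernelHom φ hC
    exact ⟨c, hc₂, hc₃, _, ⟨R2Rel.isColimitCokernelCofork φ hC c hc₃⟩⟩

end Paper
end
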